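/- The signed interval multiplication transformer is sound and most precise: for integer intervals [l₁,r₁], [l₂,r₂] with l₁ ≤ r₁ and l₂ ≤ r₂, let L = min(min(r₁·r₂, r₁·l₂), min(l₁·r₂, l₁·l₂)) and R = max(max(l₁·l₂, r₁·r₂), max(r₁·l₂, l₁·r₂)). Then (1) for all x ∈ [l₁,r₁], y ∈ [l₂,r₂], L ≤ x·y ≤ R, and (2) there exist x, x' ∈ [l₁,r₁] and y, y' ∈ [l₂,r₂] with x·y = L and x'·y' = R. -/
import Mathlib

private lemma corner_le (l₁ r₁ l₂ r₂ x y : ℤ) (h₁ : l₁ ≤ r₁) (h₂ : l₂ ≤ r₂)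
    (hx1 : l₁ ≤ x) (hx2 : x ≤ r₁) (hy1 : l₂ ≤ y) (hy2 : y ≤ r₂) :
    min (min (r₁ * r₂) (r₁ * l₂)) (min (l₁ * r₂) (l₁ * l₂)) ≤ x * y := by
  rcases le_total 0 y with hy | hy
  · rcases le_total 0 l₁ with hl | hl
    · exact le_trans (le_trans (min_le_right _ _) (min_le_right _ _))
        (by nlinarith)
    · exact le_trans (le_trans (min_le_right _ _) (min_le_left _ _))
        (by nlinarith)
  · rcases le_total 0 r₁ with hr | hr
    · exact le_trans (le_trans (min_le_left _ _) (min_le_right _ _))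
        (by nlinarith)
    · exact le_trans (le_trans (min_le_left _ _) (min_le_left _ _))
        (by nlinarith)

private lemma le_corner (l₁ r₁ l₂ r₂ x y : ℤ) (h₁ : l₁ ≤ r₁) (h₂ : l₂ ≤ r₂)
    (hx1 : l₁ ≤ x) (hx2 : x ≤ r₁) (hy1 : l₂ ≤ y) (hy2 : y ≤ r₂) :
    x * y ≤ max (max (l₁ * l₂) (r₁ * r₂)) (max (r₁ * l₂) (l₁ * r₂)) := by
  rcases le_total 0 y with hy | hy
  · rcases le_total 0 r₁ with hr | hr
    · exact le_trans (by nlinarith)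
        (le_trans (le_max_right _ _) (le_max_left _ _))
    · exact le_trans (by nlinarith : x * y ≤ r₁ * l₂)
        (le_trans (le_max_left _ _) (le_max_right _ _))
  · rcases le_total 0 l₁ with hl | hl
    · exact le_trans (by nlinarith : x * y ≤ l₁ * r₂)
        (le_trans (le_max_right _ _) (le_max_right _ _))
    · exact le_trans (by nlinarith : x * y ≤ l₁ * l₂)
        (le_trans (le_max_left _ _) (le_max_left _ _))

theorem signed_mul_interval_sound_and_precise (l₁ r₁ l₂ r₂ : ℤ)
    (h₁ : l₁ ≤ r₁) (h₂ : l₂ ≤ r₂) :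
    let L := min (min (r₁ * r₂) (r₁ * l₂)) (min (l₁ * r₂) (l₁ * l₂))
    let R := max (max (l₁ * l₂) (r₁ * r₂)) (max (r₁ * l₂) (l₁ * r₂))
    (∀ x y : ℤ, l₁ ≤ x → x ≤ r₁ → l₂ ≤ y → y ≤ r₂ → L ≤ x * y ∧ x * y ≤ R) ∧
    (∃ x y : ℤ, l₁ ≤ x ∧ x ≤ r₁ ∧ l₂ ≤ y ∧ y ≤ r₂ ∧ x * y = L) ∧
    (∃ x y : ℤ, l₁ ≤ x ∧ x ≤ r₁ ∧ l₂ ≤ y ∧ y ≤ r₂ ∧ x * y = R) := by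
  refine ⟨fun x y hx1 hx2 hy1 hy2 =>
    ⟨corner_le l₁ r₁ l₂ r₂ x y h₁ h₂ hx1 hx2 hy1 hy2,
     le_corner l₁ r₁ l₂ r₂ x y h₁ h₂ hx1 hx2 hy1 hy2⟩, ?_, ?_⟩
  · rcases min_cases (min (r₁ * r₂) (r₁ * l₂)) (min (l₁ * r₂) (l₁ * l₂)) with ⟨he, -⟩ | ⟨he, -⟩ <;>
      rw [he] <;>
      [rcases min_cases (r₁ * r₂) (r₁ * l₂) with ⟨he2, -⟩ | ⟨he2, -⟩;
       rcases min_cases (l₁ * r₂) (l₁ * l₂) with ⟨he2, -⟩ | ⟨he2, -⟩] <;>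
      rw [he2]
    · exact ⟨r₁, r₂, h₁, le_refl _, h₂, le_refl _, rfl⟩
    · exact ⟨r₁, l₂, h₁, le_refl _, le_refl _, h₂, rfl⟩
    · exact ⟨l₁, r₂, le_refl _, h₁, h₂, le_refl _, rfl⟩
    · exact ⟨l₁, l₂, le_refl _, h₁, le_refl _, h₂, rfl⟩
  · rcases max_cases (max (l₁ * l₂) (r₁ * r₂)) (max (r₁ * l₂) (l₁ * r₂)) with ⟨he, -⟩ | ⟨he, -⟩ <;>
      rw [he] <;>
      [rcases max_cases (l₁ * l₂) (r₁ * r₂) with ⟨he2, -⟩ | ⟨he2, -⟩;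
       rcases max_cases (r₁ * l₂) (l₁ * r₂) with ⟨he2, -⟩ | ⟨he2, -⟩] <;>
      rw [he2]
    · exact ⟨l₁, l₂, le_refl _, h₁, le_refl _, h₂, rfl⟩
    · exact ⟨r₁, r₂, h₁, le_refl _, h₂, le_refl _, rfl⟩
    · exact ⟨r₁, l₂, h₁, le_refl _, le_refl _, h₂, rfl⟩
    · exact ⟨l₁, r₂, le_refl _, h₁, h₂, le_refl _, rfl⟩
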